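/- Let ω(2,1), ω(3,2), ω(3,1) be nonsingular g×g integer matrices arising from three pairwise transverse rational Lagrangian subspaces (so in particular suitable products are symmetric as in Lemma on symmetry), and set Q = |det ω(2,1) det ω(3,2)| · ω(3,2)^{-1} ω(3,1) ω(2,1)^{-1}. Then Q is a symmetric matrix with integer entries and det Q ≠ 0, and Q^{-1} = −H / |det ω(2,1) det ω(3,2)| where H = −ω(2,1)ω(3,1)^{-1}ω(3,2); consequently sgn Q = −sgn H. -/

import Mathlib

/-!
With `A, B, C` the rational images of `ω(2,1), ω(3,2), ω(3,1)` and `S = B⁻¹ C A⁻¹`, the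
inverse of `S` is `A C⁻¹ B = -H`, which gives the formula for `Q⁻¹ = |d|⁻¹ S⁻¹`, where
`d = det A det B`.
Integrality comes from `det X • X⁻¹ = adj X`, so that `|d| S = ± adj B · C · adj A`.
For the signatures, scaling by `|d| > 0` changes nothing, and `S⁻¹` is congruent to `Sᵀ`
via `Sᵀ S⁻¹ S = Sᵀ`, while `Sᵀ` and `S` define the same quadratic form; hence
`sgn Q = sgn S⁻¹ = -sgn (-S⁻¹) = -sgn H`.
-/

/-- The maximal dimension of a subspace on which the quadratic map `q` is positive. -/
noncomputable def posIdx {W : Type*} [AddCommGroup W] [Module ℝ W] (q : W → ℝ) : ℕ :=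
  sSup {n : ℕ | ∃ U : Submodule ℝ W, Module.finrank ℝ U = n ∧
    ∀ x : W, x ∈ U → x ≠ 0 → 0 < q x}

/-- The signature (positive index minus negative index) of a quadratic map `q`. -/
noncomputable def qSignature {W : Type*} [AddCommGroup W] [Module ℝ W] (q : W → ℝ) : ℤ :=
  (posIdx q : ℤ) - (posIdx (fun x => -q x) : ℤ)

/-- The signature of the quadratic form `x ↦ xᵀ M x` of a rational symmetric matrix. -/
noncomputable def matSig {g : ℕ} (M : Matrix (Fin g) (Fin g) ℚ) : ℤ :=
  qSignature (fun x : Fin g → ℝ => ∑ i, ∑ j, x i * (M i j : ℝ) * x j)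

open Matrix

section Signature

variable {W W' : Type*} [AddCommGroup W] [Module ℝ W] [AddCommGroup W'] [Module ℝ W']

lemma posIdx_comp_linearEquiv (e : W ≃ₗ[ℝ] W') (q : W' → ℝ) : posIdx (q ∘ e) = posIdx q := by
  unfold posIdx
  congr 1
  ext n
  constructor
  · rintro ⟨U, rfl, hU⟩
    refine ⟨U.map (e : W →ₗ[ℝ] W'), e.finrank_map_eq U, ?_⟩
    rintro _ ⟨x, hx, rfl⟩ hx0
    exact hU x hx (by rintro rfl; simp at hx0)
  · rintro ⟨U, rfl, hU⟩
    refine ⟨U.map (e.symm : W' →ₗ[ℝ] W), e.symm.finrank_map_eq U, ?_⟩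
    rintro _ ⟨x, hx, rfl⟩ hx0
    simpa using hU x hx (by rintro rfl; simp at hx0)

lemma posIdx_const_mul {c : ℝ} (hc : 0 < c) (q : W → ℝ) :
    posIdx (fun x => c * q x) = posIdx q := by
  simp only [posIdx, mul_pos_iff_of_pos_left hc]

lemma qSignature_comp_linearEquiv (e : W ≃ₗ[ℝ] W') (q : W' → ℝ) :
    qSignature (q ∘ e) = qSignature q := by
  rw [qSignature, qSignature, posIdx_comp_linearEquiv,
    ← posIdx_comp_linearEquiv e (fun x => -q x)]
  rfl

lemma qSignature_const_mul {c : ℝ} (hc : 0 < c) (q : W → ℝ) :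
    qSignature (fun x => c * q x) = qSignature q := by
  simp only [qSignature, ← mul_neg, posIdx_const_mul hc]

lemma qSignature_neg (q : W → ℝ) : qSignature (fun x => -q x) = -qSignature q := by
  simp only [qSignature, neg_neg, neg_sub]

end Signature

section MatSig

variable {g : ℕ}

lemma matSig_eq_qSignature (M : Matrix (Fin g) (Fin g) ℚ) :
    matSig M = qSignature (fun x => x ⬝ᵥ M.map (Rat.cast : ℚ → ℝ) *ᵥ x) := by
  simp only [matSig, dotProduct, mulVec, map_apply, Finset.mul_sum, mul_assoc]

lemma matSig_neg (M : Matrix (Fin g) (Fin g) ℚ) : matSig (-M) = -matSig M := by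
  rw [matSig, matSig, ← qSignature_neg]
  simp only [Matrix.neg_apply, Rat.cast_neg, mul_neg, neg_mul, Finset.sum_neg_distrib]

lemma matSig_smul_of_pos {c : ℚ} (hc : 0 < c) (M : Matrix (Fin g) (Fin g) ℚ) :
    matSig (c • M) = matSig M := by
  rw [matSig, matSig, ← qSignature_const_mul (Rat.cast_pos.mpr hc)
    (fun x : Fin g → ℝ => ∑ i, ∑ j, x i * (M i j : ℝ) * x j)]
  simp only [Matrix.smul_apply, smul_eq_mul, Rat.cast_mul, Finset.mul_sum]
  congr! 4
  ring

lemma matSig_transpose (M : Matrix (Fin g) (Fin g) ℚ) : matSig Mᵀ = matSig M := by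
  rw [matSig, matSig]
  congr 1
  ext x
  rw [Finset.sum_comm]
  simp only [Matrix.transpose_apply]
  congr! 2
  ring

lemma matSig_transpose_mul_mul (M : Matrix (Fin g) (Fin g) ℚ) {P : Matrix (Fin g) (Fin g) ℚ}
    (hP : P.det ≠ 0) : matSig (Pᵀ * M * P) = matSig M := by
  set f : ℚ →+* ℝ := Rat.castHom ℝ
  have hPunit : IsUnit (P.map f).det := by
    rw [← RingHom.mapMatrix_apply, ← RingHom.map_det]
    exact (isUnit_iff_ne_zero.mpr hP).map f
  let e := toLinearEquiv' (P.map f) (invertibleOfIsUnitDet _ hPunit)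
  rw [matSig_eq_qSignature, matSig_eq_qSignature,
    ← qSignature_comp_linearEquiv e (fun x => x ⬝ᵥ M.map Rat.cast *ᵥ x)]
  congr 1
  ext x
  show x ⬝ᵥ (Pᵀ * M * P).map f *ᵥ x = (P.map f *ᵥ x) ⬝ᵥ M.map f *ᵥ (P.map f *ᵥ x)
  rw [Matrix.map_mul, Matrix.map_mul, transpose_map, ← mulVec_mulVec, ← mulVec_mulVec,
    dotProduct_mulVec, vecMul_transpose]

lemma matSig_nonsing_inv {S : Matrix (Fin g) (Fin g) ℚ} (hS : S.det ≠ 0) :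
    matSig S⁻¹ = matSig S := by
  have hSunit : IsUnit S.det := isUnit_iff_ne_zero.mpr hS
  calc matSig S⁻¹ = matSig (Sᵀ * S⁻¹ * S) := (matSig_transpose_mul_mul _ hS).symm
    _ = matSig Sᵀ := by rw [nonsing_inv_mul_cancel_right _ _ hSunit]
    _ = matSig S := matSig_transpose S

end MatSig

section Algebra

variable {n R : Type*} [Fintype n] [DecidableEq n] [CommRing R]

lemma det_smul_nonsing_inv {A : Matrix n n R} (hA : IsUnit A.det) :
    A.det • A⁻¹ = A.adjugate := by
  rw [nonsing_inv_apply _ hA, smul_smul, hA.mul_val_inv, one_smul]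

lemma det_mul_det_smul_inv_mul_mul_inv {A B : Matrix n n R} (C : Matrix n n R)
    (hA : IsUnit A.det) (hB : IsUnit B.det) :
    (A.det * B.det) • (B⁻¹ * C * A⁻¹) = B.adjugate * C * A.adjugate := by
  rw [← det_smul_nonsing_inv hA, ← det_smul_nonsing_inv hB, Matrix.mul_smul, Matrix.smul_mul,
    Matrix.smul_mul, smul_smul, mul_comm]

lemma inv_mul_mul_inv_inv {A B : Matrix n n R} (C : Matrix n n R)
    (hA : IsUnit A.det) (hB : IsUnit B.det) : (B⁻¹ * C * A⁻¹)⁻¹ = A * C⁻¹ * B := by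
  rw [Matrix.mul_inv_rev, Matrix.mul_inv_rev, nonsing_inv_nonsing_inv _ hA,
    nonsing_inv_nonsing_inv _ hB, Matrix.mul_assoc]

end Algebra

section IntegerMatrices

variable {n : Type*} [Fintype n] [DecidableEq n]

lemma det_map_intCast (M : Matrix n n ℤ) : (M.map (Int.cast : ℤ → ℚ)).det = M.det :=
  ((Int.castRingHom ℚ).map_det M).symm

lemma adjugate_map_intCast (M : Matrix n n ℤ) :
    (M.map (Int.cast : ℤ → ℚ)).adjugate = M.adjugate.map Int.cast :=
  ((Int.castRingHom ℚ).map_adjugate M).symm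

lemma abs_det_mul_det_smul_inv_mul_mul_inv {A B : Matrix n n ℤ} (C : Matrix n n ℤ)
    (hA : A.det ≠ 0) (hB : B.det ≠ 0) :
    |((A.det * B.det : ℤ) : ℚ)| • ((B.map (Int.cast : ℤ → ℚ))⁻¹ * C.map Int.cast
      * (A.map (Int.cast : ℤ → ℚ))⁻¹)
      = ((A.det * B.det).sign : ℚ) • (B.adjugate * C * A.adjugate).map Int.cast := by
  have hA' : IsUnit (A.map (Int.cast : ℤ → ℚ)).det := by simpa [det_map_intCast] using hA
  have hB' : IsUnit (B.map (Int.cast : ℤ → ℚ)).det := by simpa [det_map_intCast] using hB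
  rw [← Int.cast_abs, ← Int.sign_mul_self_eq_abs, Int.cast_mul, mul_smul, Int.cast_mul,
    ← det_map_intCast, ← det_map_intCast, det_mul_det_smul_inv_mul_mul_inv _ hA' hB',
    adjugate_map_intCast, adjugate_map_intCast]
  ext i j
  simp [Matrix.mul_apply]

end IntegerMatrices

/-- For nonsingular integer matrices `ω(2,1)`, `ω(3,2)`, `ω(3,1)` coming
from three pairwise transverse rational Lagrangians (so that `ω(3,2)⁻¹ω(3,1)ω(2,1)⁻¹` is
symmetric), the matrix `Q = |det ω(2,1) det ω(3,2)| · ω(3,2)⁻¹ω(3,1)ω(2,1)⁻¹` is symmetric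
with integer entries and nonzero determinant,
`Q⁻¹ = −H / |det ω(2,1) det ω(3,2)|` where `H = −ω(2,1)ω(3,1)⁻¹ω(3,2)`, and
`sgn Q = −sgn H`. -/
theorem stmt_18 (g : ℕ) (w21 w32 w31 : Matrix (Fin g) (Fin g) ℤ)
    (h21 : w21.det ≠ 0) (h32 : w32.det ≠ 0) (h31 : w31.det ≠ 0)
    (hsymm : ((w32.map (Int.cast : ℤ → ℚ))⁻¹ * (w31.map (Int.cast : ℤ → ℚ))
        * (w21.map (Int.cast : ℤ → ℚ))⁻¹).IsSymm) :
    (∀ i j, ∃ z : ℤ,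
        ((|(w21.det * w32.det : ℤ)| : ℚ)
          • ((w32.map (Int.cast : ℤ → ℚ))⁻¹ * (w31.map (Int.cast : ℤ → ℚ))
            * (w21.map (Int.cast : ℤ → ℚ))⁻¹)) i j = (z : ℚ)) ∧
    ((|(w21.det * w32.det : ℤ)| : ℚ)
        • ((w32.map (Int.cast : ℤ → ℚ))⁻¹ * (w31.map (Int.cast : ℤ → ℚ))
          * (w21.map (Int.cast : ℤ → ℚ))⁻¹)).IsSymm ∧
    ((|(w21.det * w32.det : ℤ)| : ℚ)
        • ((w32.map (Int.cast : ℤ → ℚ))⁻¹ * (w31.map (Int.cast : ℤ → ℚ))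
          * (w21.map (Int.cast : ℤ → ℚ))⁻¹)).det ≠ 0 ∧
    ((|(w21.det * w32.det : ℤ)| : ℚ)
        • ((w32.map (Int.cast : ℤ → ℚ))⁻¹ * (w31.map (Int.cast : ℤ → ℚ))
          * (w21.map (Int.cast : ℤ → ℚ))⁻¹))⁻¹
      = (-(|(w21.det * w32.det : ℤ)| : ℚ)⁻¹)
        • (-((w21.map (Int.cast : ℤ → ℚ)) * (w31.map (Int.cast : ℤ → ℚ))⁻¹
          * (w32.map (Int.cast : ℤ → ℚ)))) ∧
    matSig ((|(w21.det * w32.det : ℤ)| : ℚ)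
        • ((w32.map (Int.cast : ℤ → ℚ))⁻¹ * (w31.map (Int.cast : ℤ → ℚ))
          * (w21.map (Int.cast : ℤ → ℚ))⁻¹))
      = - matSig (-((w21.map (Int.cast : ℤ → ℚ)) * (w31.map (Int.cast : ℤ → ℚ))⁻¹
          * (w32.map (Int.cast : ℤ → ℚ)))) := by
  have hQ := abs_det_mul_det_smul_inv_mul_mul_inv w31 h21 h32
  set A := w21.map (Int.cast : ℤ → ℚ)
  set B := w32.map (Int.cast : ℤ → ℚ)
  set C := w31.map (Int.cast : ℤ → ℚ)
  set S := B⁻¹ * C * A⁻¹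
  set c : ℚ := |(w21.det * w32.det : ℤ)|
  have hA : IsUnit A.det := by simpa [A, det_map_intCast] using h21
  have hB : IsUnit B.det := by simpa [B, det_map_intCast] using h32
  have hC : IsUnit C.det := by simpa [C, det_map_intCast] using h31
  have hc : 0 < c := by positivity
  have hSinv : S⁻¹ = A * C⁻¹ * B := inv_mul_mul_inv_inv C hA hB
  have hS : IsUnit S.det := by
    simpa only [S, det_mul] using
      ((isUnit_nonsing_inv_det B hB).mul hC).mul (isUnit_nonsing_inv_det A hA)
  refine ⟨fun i j => ?_, hsymm.smul c, ?_, ?_, ?_⟩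
  · rw [hQ]
    exact ⟨(w21.det * w32.det).sign * (w32.adjugate * w31 * w21.adjugate) i j, by simp⟩
  · rw [det_smul]
    exact mul_ne_zero (pow_ne_zero _ hc.ne') hS.ne_zero
  · rw [neg_smul_neg, ← hSinv]
    refine inv_eq_left_inv ?_
    rw [smul_mul_smul_comm, inv_mul_cancel₀ hc.ne', nonsing_inv_mul _ hS, one_smul]
  · calc matSig (c • S) = matSig S := matSig_smul_of_pos hc S
      _ = matSig S⁻¹ := (matSig_nonsing_inv hS.ne_zero).symm
      _ = -matSig (-(A * C⁻¹ * B)) := by rw [matSig_neg, neg_neg, hSinv]
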